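/- Let A, B be abelian groups, d ≥ 1, and let P ∈ A, Q ∈ B have order exactly d. Let μ : A × B → (A × B)/⟨(P, Q)⟩ be the quotient map. Then μ(A × {0}) ∩ μ({0} × B) is the cyclic group of order d generated by μ(P, 0), and μ(P, 0) = -μ(0, Q). -/

import Mathlib

/-! If `μ(a, 0) = μ(0, b)` then `(a, -b) = m • (P, Q)` for some `m : ℤ`, so `μ(a, 0) = m • μ(P, 0)`.
The order of `μ(P, 0)` is that of `P`: if `(n • P, 0) = m • (P, Q)`, then `addOrderOf Q ∣ m`,
hence `addOrderOf P ∣ m` and `n • P = m • P = 0`. -/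

open AddSubgroup QuotientAddGroup

namespace QuotientAddGroup

variable {A B : Type*} [AddCommGroup A] [AddCommGroup B] (P : A) (Q : B)

theorem mk'_zmultiples_prod_eq_zero_iff (x : A × B) :
    mk' (zmultiples (P, Q)) x = 0 ↔ ∃ m : ℤ, m • (P, Q) = x := by
  rw [← AddMonoidHom.mem_ker, ker_mk', mem_zmultiples_iff]

theorem mk'_zmultiples_prod_fst_eq_neg_snd :
    mk' (zmultiples (P, Q)) (P, 0) = -mk' (zmultiples (P, Q)) (0, Q) := by
  rw [eq_neg_iff_add_eq_zero, ← map_add, mk'_zmultiples_prod_eq_zero_iff]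
  exact ⟨1, by simp⟩

theorem map_prod_top_bot_inf_map_prod_bot_top_mk'_zmultiples :
    AddSubgroup.map (mk' (zmultiples (P, Q))) (prod ⊤ ⊥) ⊓
        AddSubgroup.map (mk' (zmultiples (P, Q))) (prod ⊥ ⊤) =
      zmultiples (mk' (zmultiples (P, Q)) (P, 0)) := by
  apply le_antisymm
  · rintro x ⟨⟨⟨a, _⟩, ⟨-, rfl⟩, rfl⟩, ⟨⟨_, b⟩, ⟨rfl, -⟩, hb⟩⟩
    obtain ⟨m, hm⟩ := (mk'_zmultiples_prod_eq_zero_iff P Q ((a, 0) - (0, b))).1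
      (by rw [map_sub, hb, sub_self])
    refine mem_zmultiples_iff.2 ⟨m, ?_⟩
    rw [← map_zsmul]
    congr 1
    simpa using congrArg Prod.fst hm
  · rw [zmultiples_le]
    refine ⟨⟨(P, 0), ⟨trivial, rfl⟩, rfl⟩, ⟨(0, -Q), ⟨rfl, trivial⟩, ?_⟩⟩
    rw [mk'_zmultiples_prod_fst_eq_neg_snd, ← map_neg, Prod.neg_mk, neg_zero]

theorem addOrderOf_mk'_zmultiples_prod_fst (h : addOrderOf P ∣ addOrderOf Q) :
    addOrderOf (mk' (zmultiples (P, Q)) (P, 0)) = addOrderOf P := by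
  refine addOrderOf_eq_addOrderOf_iff.2 fun n => ?_
  rw [← map_nsmul, Prod.smul_mk, smul_zero, mk'_zmultiples_prod_eq_zero_iff]
  constructor
  · rintro ⟨m, hm⟩
    rw [Prod.smul_mk, Prod.mk.injEq] at hm
    obtain ⟨hmP, hmQ⟩ := hm
    have hQm : (addOrderOf Q : ℤ) ∣ m := addOrderOf_dvd_iff_zsmul_eq_zero.2 hmQ
    rw [← hmP, ← addOrderOf_dvd_iff_zsmul_eq_zero]
    exact (Int.natCast_dvd_natCast.2 h).trans hQm
  · exact fun hn => ⟨0, by rw [zero_smul, hn]; rfl⟩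

end QuotientAddGroup

theorem stmt_15_general {A B : Type*} [AddCommGroup A] [AddCommGroup B] (d : ℕ)
    (P : A) (Q : B) (hP : addOrderOf P = d) (hQ : addOrderOf Q = d) :
    let μ := QuotientAddGroup.mk' (AddSubgroup.zmultiples ((P, Q) : A × B))
    (AddSubgroup.map μ (AddSubgroup.prod ⊤ ⊥)) ⊓ (AddSubgroup.map μ (AddSubgroup.prod ⊥ ⊤)) =
        AddSubgroup.zmultiples (μ (P, 0)) ∧
      Nat.card (AddSubgroup.zmultiples (μ (P, 0))) = d ∧
      μ (P, 0) = -μ (0, Q) := by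
  refine ⟨map_prod_top_bot_inf_map_prod_bot_top_mk'_zmultiples P Q, ?_,
    mk'_zmultiples_prod_fst_eq_neg_snd P Q⟩
  rw [Nat.card_zmultiples, addOrderOf_mk'_zmultiples_prod_fst P Q (by rw [hP, hQ]), hP]

/-- Let `P ∈ A`, `Q ∈ B` have order exactly `d ≥ 1` and let
`μ : A × B → (A × B)/⟨(P,Q)⟩` be the quotient map. Then
`μ(A × {0}) ∩ μ({0} × B)` is the cyclic group generated by `μ(P, 0)`, this group has
order `d`, and `μ(P, 0) = -μ(0, Q)`. -/
theorem stmt_15 {A B : Type*} [AddCommGroup A] [AddCommGroup B] (d : ℕ) (hd : 1 ≤ d)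
    (P : A) (Q : B) (hP : addOrderOf P = d) (hQ : addOrderOf Q = d) :
    let μ := QuotientAddGroup.mk' (AddSubgroup.zmultiples ((P, Q) : A × B))
    (AddSubgroup.map μ (AddSubgroup.prod ⊤ ⊥)) ⊓ (AddSubgroup.map μ (AddSubgroup.prod ⊥ ⊤)) =
        AddSubgroup.zmultiples (μ (P, 0)) ∧
      Nat.card (AddSubgroup.zmultiples (μ (P, 0))) = d ∧
      μ (P, 0) = -μ (0, Q) :=
  stmt_15_general d P Q hP hQ
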